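/- arXiv:1611.02911 — 2 statements merged into one kernel-verified Lean document; each statement's English description precedes it below -/
import Mathlib

section
/- Fix δ ≥ 1 and let H be a graph with maximum degree k ≥ 2. Define S(δ,H) to be the set of vectors (v_1,…,v_δ) ∈ V(H)^δ whose entries have exactly k common neighbours in H, and let s(δ,H) = |S(δ,H)|. Then there exists a constant β(δ,H) such that for all n ≥ β(δ,H), hom(K_{δ,n−δ}, H) ≤ s(δ,H) · k^{n+1−δ}. -/
/-- The number of graph homomorphisms from a simple graph `G` to the (possibly looped)
graph given by the relation `H`. -/
noncomputable def homCount {V W : Type*} (G : SimpleGraph V) (H : W → W → Prop) : ℕ :=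
  Nat.card {f : V → W // ∀ u v, G.Adj u v → H (f u) (f v)}

/-- The degree of a vertex `v` in the (possibly looped) graph `H`: a loop counts once. -/
noncomputable def relDeg {W : Type*} (H : W → W → Prop) (v : W) : ℕ :=
  Nat.card {w // H v w}

/-- The maximum degree of the (possibly looped) graph `H`. -/
noncomputable def maxDeg {W : Type*} [Fintype W] (H : W → W → Prop) : ℕ :=
  Finset.univ.sup (relDeg H)

/-- The degree of a vertex of a simple graph (no decidability assumptions). -/
noncomputable def nDeg {V : Type*} (G : SimpleGraph V) (v : V) : ℕ :=
  Nat.card {w // G.Adj v w}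

/-- `s(δ,H)`: the number of vectors in `V(H)^δ` whose entries have exactly `k` common
neighbours in `H`. -/
noncomputable def sCount {W : Type*} (H : W → W → Prop) (δ k : ℕ) : ℕ :=
  Nat.card {f : Fin δ → W // Nat.card {w // ∀ i, H (f i) w} = k}

open Finset in
lemma homCount_bipartite {W : Type*} [Fintype W] (δ m : ℕ) (H : W → W → Prop)
    (hsym : Symmetric H) :
    homCount (completeBipartiteGraph (Fin δ) (Fin m)) H
      = ∑ f : Fin δ → W, (Nat.card {w // ∀ i, H (f i) w}) ^ m := by
  classical
  rw [homCount]
  have e : {f : Fin δ ⊕ Fin m → W // ∀ u v,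
        (completeBipartiteGraph (Fin δ) (Fin m)).Adj u v → H (f u) (f v)}
      ≃ Σ f : Fin δ → W, (Fin m → {w // ∀ i, H (f i) w}) := by
    refine ⟨fun φ => ⟨fun i => φ.1 (Sum.inl i),
        fun j => ⟨φ.1 (Sum.inr j), fun i => φ.2 _ _ (by simp)⟩⟩,
      fun p => ⟨Sum.elim p.1 (fun j => (p.2 j).1), ?_⟩, fun φ => ?_, fun p => ?_⟩
    · rintro (i|j) (i'|j') h <;> simp at h
      · exact (p.2 j').2 i
      · exact hsym ((p.2 j).2 i')
    · ext (i|j) <;> rfl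
    · rfl
  rw [Nat.card_congr e, Nat.card_eq_fintype_card, Fintype.card_sigma]
  refine Finset.sum_congr rfl fun f _ => ?_
  rw [Fintype.card_fun, ← Nat.card_eq_fintype_card, Fintype.card_fin]

lemma growth (C k : ℕ) (hk : 2 ≤ k) : ∃ m₀ : ℕ, ∀ m ≥ m₀, C * (k-1)^m ≤ k^m := by
  have hk0 : (0:ℝ) < k := by positivity
  have hr1 : ((k:ℝ)-1)/k < 1 := by
    rw [div_lt_one hk0]; linarith
  have hr0 : (0:ℝ) ≤ ((k:ℝ)-1)/k := by
    apply div_nonneg _ hk0.le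
    have : (2:ℝ) ≤ k := by exact_mod_cast hk
    linarith
  have ht := tendsto_pow_atTop_nhds_zero_of_lt_one hr0 hr1
  have hε : (0:ℝ) < 1/(C+1) := by positivity
  have h2 := (ht.eventually (gt_mem_nhds hε)).exists_forall_of_atTop
  obtain ⟨m₀, hm₀⟩ := h2
  refine ⟨m₀, fun m hm => ?_⟩
  have hrm := hm₀ m hm
  have hcast : ((k:ℝ)-1) = ((k-1 : ℕ) : ℝ) := by
    have : 1 ≤ k := by omega
    push_cast [this]; ring
  have key : (C:ℝ) * ((k-1:ℕ):ℝ)^m ≤ (k:ℝ)^m := by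
    rw [← hcast]
    have h3 : ((k:ℝ)-1)^m = (((k:ℝ)-1)/k)^m * k^m := by
      rw [div_pow, div_mul_cancel₀]
      positivity
    rw [h3, ← mul_assoc]
    have h4 : (C:ℝ) * (((k:ℝ)-1)/k)^m ≤ 1 := by
      have := hrm.le
      have hC : (0:ℝ) ≤ C := by positivity
      calc (C:ℝ) * (((k:ℝ)-1)/k)^m ≤ C * (1/(C+1)) := by
            apply mul_le_mul_of_nonneg_left this hC
        _ ≤ 1 := by
            rw [mul_one_div, div_le_one (by positivity)]; linarith
      
    calc (C:ℝ) * (((k:ℝ)-1)/k)^m * k^m ≤ 1 * k^m :=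
          mul_le_mul_of_nonneg_right h4 (by positivity)
      _ = k^m := one_mul _
  exact_mod_cast key


/-- if `H` has maximum degree `k ≥ 2` and `δ ≥ 1`, then there is `β` such
that for all `n ≥ β`, `hom(K_{δ,n-δ}, H) ≤ s(δ,H) * k ^ (n + 1 - δ)`. -/
theorem stmt7 {W : Type*} [Fintype W] (δ k : ℕ) (hδ : 1 ≤ δ) (hk : 2 ≤ k)
    (H : W → W → Prop) (hsym : Symmetric H) (hmax : maxDeg H = k) :
    ∃ β : ℕ, ∀ n ≥ β,
      homCount (completeBipartiteGraph (Fin δ) (Fin (n - δ))) H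
        ≤ sCount H δ k * k ^ (n + 1 - δ) := by
  classical
  obtain ⟨m₀, hm₀⟩ := growth (Fintype.card W ^ δ) k hk
  -- c f ≤ k for all f
  have hcle : ∀ f : Fin δ → W, Nat.card {w // ∀ i, H (f i) w} ≤ k := by
    intro f
    have h1 : Nat.card {w // ∀ i, H (f i) w} ≤ relDeg H (f ⟨0, hδ⟩) := by
      apply Nat.card_le_card_of_injective (fun w => ⟨w.1, w.2 ⟨0, hδ⟩⟩)
      intro a b hab
      simp only [Subtype.mk.injEq] at hab
      exact Subtype.ext hab
    refine h1.trans ?_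
    rw [← hmax, maxDeg]
    exact Finset.le_sup (Finset.mem_univ _)
  -- sCount ≥ 1
  have hW : (Finset.univ : Finset W).Nonempty := by
    rcases Finset.eq_empty_or_nonempty (Finset.univ : Finset W) with h | h
    · exfalso; rw [maxDeg, h, Finset.sup_empty] at hmax; simp at hmax; omega
    · exact h
  obtain ⟨v, -, hv⟩ := Finset.exists_mem_eq_sup Finset.univ hW (relDeg H)
  have hcv : Nat.card {w // ∀ _ : Fin δ, H v w} = k := by
    have e : {w // ∀ _ : Fin δ, H v w} ≃ {w // H v w} :=
      Equiv.subtypeEquivRight (fun w => ⟨fun h => h ⟨0, hδ⟩, fun h _ => h⟩)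
    rw [Nat.card_congr e]
    rw [← hmax, maxDeg, hv, relDeg]
  have hs1 : 1 ≤ sCount H δ k := by
    rw [sCount]
    have : Nonempty {f : Fin δ → W // Nat.card {w // ∀ i, H (f i) w} = k} :=
      ⟨⟨fun _ => v, hcv⟩⟩
    exact Nat.card_pos
  refine ⟨m₀ + δ, fun n hn => ?_⟩
  have hδn : δ ≤ n := le_trans (Nat.le_add_left δ m₀) hn
  set m := n - δ with hm
  have hmm : m₀ ≤ m := by omega
  have hn1 : n + 1 - δ = m + 1 := by omega
  rw [hn1, homCount_bipartite δ m H hsym]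
  set P : (Fin δ → W) → Prop := fun f => Nat.card {w // ∀ i, H (f i) w} = k with hP
  have split := Finset.sum_filter_add_sum_filter_not Finset.univ P
    (fun f => (Nat.card {w // ∀ i, H (f i) w}) ^ m)
  rw [← split]
  have h1 : ∑ f ∈ Finset.filter P Finset.univ,
      (Nat.card {w // ∀ i, H (f i) w}) ^ m = sCount H δ k * k ^ m := by
    rw [Finset.sum_congr rfl (fun f hf => by
      rw [(Finset.mem_filter.mp hf).2]), Finset.sum_const, smul_eq_mul]
    congr 1
    rw [sCount, Nat.card_eq_fintype_card, Fintype.card_subtype]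
  have h2 : ∑ f ∈ Finset.filter (fun f => ¬ P f) Finset.univ,
      (Nat.card {w // ∀ i, H (f i) w}) ^ m ≤ Fintype.card W ^ δ * (k - 1) ^ m := by
    calc ∑ f ∈ Finset.filter (fun f => ¬ P f) Finset.univ,
        (Nat.card {w // ∀ i, H (f i) w}) ^ m
        ≤ ∑ _f ∈ Finset.filter (fun f => ¬ P f) Finset.univ, (k - 1) ^ m := by
          refine Finset.sum_le_sum fun f hf => Nat.pow_le_pow_left ?_ m
          have h5 := hcle f
          have hne := (Finset.mem_filter.mp hf).2
          exact Nat.le_sub_one_of_lt (lt_of_le_of_ne h5 hne)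
      _ = (Finset.filter (fun f => ¬ P f) Finset.univ).card * (k - 1) ^ m := by
          rw [Finset.sum_const, smul_eq_mul]
      _ ≤ Fintype.card W ^ δ * (k - 1) ^ m := by
          apply Nat.mul_le_mul_right
          calc (Finset.filter (fun f => ¬ P f) Finset.univ).card
              ≤ (Finset.univ : Finset (Fin δ → W)).card := Finset.card_filter_le _ _
            _ = Fintype.card W ^ δ := by
                rw [Finset.card_univ, Fintype.card_fun, Fintype.card_fin]
  have h3 : Fintype.card W ^ δ * (k - 1) ^ m ≤ k ^ m := hm₀ m hmm
  have h4 : k ^ m ≤ sCount H δ k * (k - 1) * k ^ m := by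
    have h5 : 1 ≤ sCount H δ k * (k - 1) :=
      Nat.one_le_iff_ne_zero.mpr
        (Nat.mul_ne_zero (Nat.one_le_iff_ne_zero.mp hs1) (Nat.sub_ne_zero_of_lt hk))
    calc k ^ m = 1 * k ^ m := (one_mul _).symm
      _ ≤ sCount H δ k * (k - 1) * k ^ m := Nat.mul_le_mul_right _ h5
  have hfin : sCount H δ k * k ^ m + sCount H δ k * (k - 1) * k ^ m
      = sCount H δ k * k ^ (m + 1) := by
    have hk1 : 1 + (k - 1) = k := Nat.add_sub_cancel' (one_le_two.trans hk)
    calc sCount H δ k * k ^ m + sCount H δ k * (k - 1) * k ^ m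
        = sCount H δ k * (1 + (k - 1)) * k ^ m := by ring
      _ = sCount H δ k * k * k ^ m := by rw [hk1]
      _ = sCount H δ k * k ^ (m + 1) := by ring
  calc (∑ f ∈ Finset.filter P Finset.univ, (Nat.card {w // ∀ i, H (f i) w}) ^ m)
        + ∑ f ∈ Finset.filter (fun f => ¬ P f) Finset.univ,
            (Nat.card {w // ∀ i, H (f i) w}) ^ m
      ≤ sCount H δ k * k ^ m + sCount H δ k * (k - 1) * k ^ m := by
        rw [h1]
        exact Nat.add_le_add_left ((h2.trans h3).trans h4) _
    _ = sCount H δ k * k ^ (m + 1) := hfin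
end

section
/- Fix δ ≥ 3 and t with 3 ≤ t ≤ δ such that t−1 divides δ, say δ = (t−1)α. Then there exists k_0(δ) such that for all k ≥ k_0(δ) and all m ∈ ℕ: if G is any graph on n = mtα vertices with minimum degree at least δ, then hom(G, kK_t) ≤ hom(m·T_t(tα), kK_t) = (t! k)^m, with equality if and only if G is the disjoint union of m copies of T_t(tα). -/
/-- `kK_t`: the disjoint union of `k` copies of the complete loopless graph `K_t`. -/
def kKt (k t : ℕ) : SimpleGraph (Fin k × Fin t) where
  Adj x y := x.1 = y.1 ∧ x.2 ≠ y.2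
  symm := ⟨fun _ _ h => ⟨h.1.symm, h.2.symm⟩⟩
  loopless := ⟨fun _ h => h.2 rfl⟩

/-- `m` disjoint copies of the Turán graph `T_t(tα)` (with `t` parts of size `α` each). -/
def mTuran (m t α : ℕ) : SimpleGraph (Fin m × Fin t × Fin α) where
  Adj x y := x.1 = y.1 ∧ x.2.1 ≠ y.2.1
  symm := ⟨fun _ _ h => ⟨h.1.symm, h.2.symm⟩⟩
  loopless := ⟨fun _ h => h.2 rfl⟩

/-!
A homomorphism `G → kK_t` is a proper `t`-colouring of `G` together with a choice of a copy of
`K_t` for every connected component, so `hom(G, kK_t) = ∏_C k · #col_t(C)` over the components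
`C`. In a `t`-coloured component of minimum degree `(t-1)α` each colour class avoids the
neighbourhood of each of its vertices; summing over the classes gives `|C| ≥ tα`, and equality
forces `C ≅ T_t(tα)`, which has exactly `t!` colourings. Hence `(k · #col_t(C))^(tα) ≤ (t!k)^|C|`,
with equality for Turán components, and strict inequality for larger ones (bound
`#col_t(C) ≤ t^|C|`) once `k > t^(tα(tα+1))`. Multiplying over the components,
`hom(G, kK_t)^(tα) ≤ (t!k)^(mtα)`, with equality only if `G` is `m` copies of `T_t(tα)`.
-/

open SimpleGraph Function Finset
open scoped Nat

lemma Nat.card_eq_sum_card_fiber {α β : Type*} [Finite α] [Fintype β] (f : α → β) :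
    Nat.card α = ∑ b, Nat.card {a // f a = b} := by
  rw [← Nat.card_sigma, Nat.card_congr (Equiv.sigmaFiberEquiv f)]

lemma Nat.pow_mul_pow_lt_pow {t k N n : ℕ} (ht : 1 ≤ t) (hNn : N < n)
    (hk : t ^ (N * (N + 1)) < k) : k ^ N * t ^ (n * N) < k ^ n := by
  have hexp : n * N ≤ N * (N + 1) * (n - N) := by
    obtain ⟨d, rfl⟩ : ∃ d, n = N + 1 + d := ⟨n - N - 1, by omega⟩
    rw [show N + 1 + d - N = d + 1 by omega,
      show N * (N + 1) * (d + 1) = (N + 1 + d) * N + N * N * d by ring]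
    omega
  calc k ^ N * t ^ (n * N) ≤ k ^ N * (t ^ (N * (N + 1))) ^ (n - N) := by
        rw [← pow_mul]
        exact Nat.mul_le_mul_left _ (Nat.pow_le_pow_right ht hexp)
    _ < k ^ N * k ^ (n - N) :=
        Nat.mul_lt_mul_of_pos_left (Nat.pow_lt_pow_left hk (by omega)) (pow_pos (by omega) _)
    _ = k ^ n := by rw [← pow_add, Nat.add_sub_cancel' hNn.le]

namespace SimpleGraph

lemma Reachable.eq_of_forall_adj {V X : Type*} {G : SimpleGraph V} {f : V → X}
    (hf : ∀ u v, G.Adj u v → f u = f v) {u v : V} (h : G.Reachable u v) : f u = f v := by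
  obtain ⟨p⟩ := h
  induction p with
  | nil => rfl
  | cons h _ ih => exact (hf _ _ h).trans ih

lemma homCount_congr {V V' W : Type*} {G : SimpleGraph V} {G' : SimpleGraph V'}
    (H : W → W → Prop) (e : G ≃g G') : homCount G H = homCount G' H :=
  Nat.card_congr
    { toFun f := ⟨f.1 ∘ e.symm, fun _ _ h => f.2 _ _ (e.symm.map_adj_iff.mpr h)⟩
      invFun f := ⟨f.1 ∘ e, fun _ _ h => f.2 _ _ (e.map_adj_iff.mpr h)⟩
      left_inv f := by ext v; simp
      right_inv f := by ext v; simp }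

section Blocks

variable {V ι : Type*} {G : SimpleGraph V} {k t : ℕ} (π : V → ι)

def Coloring.equivPiInduce {β : Type*} (hadj : ∀ u v, G.Adj u v → π u = π v) :
    G.Coloring β ≃ ∀ i, (G.induce {v | π v = i}).Coloring β where
  toFun C i := C.comp (Embedding.induce _).toHom
  invFun D := Coloring.mk (fun v => D (π v) ⟨v, rfl⟩) fun {u v} huv => by
    have transport : ∀ i j (e : i = j) (x : V) (hx : π x = i),
        D i ⟨x, hx⟩ = D j ⟨x, hx.trans e⟩ := by
      rintro i _ rfl x hx; rfl
    rw [transport (π v) (π u) (hadj u v huv).symm v rfl]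
    exact (D (π u)).valid (v := ⟨u, rfl⟩) (w := ⟨v, _⟩) huv
  left_inv C := rfl
  right_inv D := by
    funext i
    ext ⟨v, hv⟩
    subst hv
    rfl

noncomputable def kKtHomEquiv (hsurj : Surjective π) (hadj : ∀ u v, G.Adj u v → π u = π v)
    (hreach : ∀ u v, π u = π v → G.Reachable u v) :
    {f : V → Fin k × Fin t // ∀ u v, G.Adj u v → (kKt k t).Adj (f u) (f v)} ≃
      (ι → Fin k) × G.Coloring (Fin t) where
  toFun f := (fun i => (f.1 (surjInv hsurj i)).1,
    Coloring.mk (fun v => (f.1 v).2) fun h => (f.2 _ _ h).2)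
  invFun p :=
    ⟨fun v => (p.1 (π v), p.2 v), fun u v h => ⟨congrArg p.1 (hadj u v h), p.2.valid h⟩⟩
  left_inv f := Subtype.ext <| funext fun v => Prod.ext
    ((hreach _ _ (surjInv_eq hsurj (π v))).eq_of_forall_adj fun _ _ h => (f.2 _ _ h).1) rfl
  right_inv p := by
    ext i
    · simp [surjInv_eq hsurj]
    · rfl

lemma homCount_kKt_eq_prod [Fintype ι] (hsurj : Surjective π)
    (hadj : ∀ u v, G.Adj u v → π u = π v) (hreach : ∀ u v, π u = π v → G.Reachable u v) :
    homCount G (kKt k t).Adj =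
      ∏ i, k * Nat.card ((G.induce {v | π v = i}).Coloring (Fin t)) := by
  rw [homCount, Nat.card_congr (kKtHomEquiv π hsurj hadj hreach), Nat.card_prod, Nat.card_fun,
    Nat.card_congr (Coloring.equivPiInduce π hadj), Nat.card_pi, prod_mul_distrib, prod_const,
    card_univ, Nat.card_eq_fintype_card, Fintype.card_fin, Nat.card_eq_fintype_card]

end Blocks

section CompleteMultipartite

variable {U β : Type*} {H : SimpleGraph U}

noncomputable def coloringEquivPerm [Finite β] (c : U → β) (hc : Surjective c)
    (hadj : ∀ u v, H.Adj u v ↔ c u ≠ c v) : H.Coloring β ≃ Equiv.Perm β := by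
  let s := surjInv hc
  have hs : ∀ i, c (s i) = i := surjInv_eq hc
  have bij : ∀ d : H.Coloring β, Bijective (d ∘ s) := fun d =>
    Finite.injective_iff_bijective.mp fun i j hij => by
      by_contra hne
      exact d.valid ((hadj _ _).mpr (by rwa [hs, hs])) hij
  have factor : ∀ (d : H.Coloring β) v, d (s (c v)) = d v := fun d v => by
    obtain ⟨j, hj⟩ := (bij d).2 (d v)
    by_cases hjv : j = c v
    · rw [← hjv]; exact hj
    · exact absurd hj.symm (d.valid ((hadj _ _).mpr (by rw [hs]; exact Ne.symm hjv)))
  exact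
    { toFun d := Equiv.ofBijective _ (bij d)
      invFun σ := Coloring.mk (σ ∘ c) fun h => σ.injective.ne ((hadj _ _).mp h)
      left_inv d := by ext v; exact factor d v
      right_inv σ := by ext i; exact congrArg σ (hs i) }

lemma card_coloring_eq_factorial [Fintype β] (c : U → β) (hc : Surjective c)
    (hadj : ∀ u v, H.Adj u v ↔ c u ≠ c v) : Nat.card (H.Coloring β) = (Fintype.card β)! := by
  classical
  rw [Nat.card_congr (coloringEquivPerm c hc hadj), Nat.card_eq_fintype_card, Fintype.card_perm]

end CompleteMultipartite

lemma homCount_mTuran (m t α k : ℕ) (ht : 2 ≤ t) (hα : 0 < α) :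
    homCount (mTuran m t α) (kKt k t).Adj = (t ! * k) ^ m := by
  have : Nontrivial (Fin t) := Fin.nontrivial_iff_two_le.mpr ht
  have hadj (x y : Fin m × Fin t × Fin α) :
      (mTuran m t α).Adj x y ↔ x.1 = y.1 ∧ x.2.1 ≠ y.2.1 := Iff.rfl
  have hreach (x y : Fin m × Fin t × Fin α) (hxy : x.1 = y.1) :
      (mTuran m t α).Reachable x y := by
    by_cases h : x.2.1 = y.2.1
    · obtain ⟨q, hq⟩ := exists_ne x.2.1
      exact ((hadj x (x.1, q, x.2.2)).mpr ⟨rfl, hq.symm⟩).reachable.trans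
        ((hadj (x.1, q, x.2.2) y).mpr ⟨hxy, fun e => hq (e.trans h.symm)⟩).reachable
    · exact ((hadj x y).mpr ⟨hxy, h⟩).reachable
  have hblock (i : Fin m) :
      Nat.card (((mTuran m t α).induce {x | x.1 = i}).Coloring (Fin t)) = t ! := by
    rw [card_coloring_eq_factorial (fun x => x.1.2.1) (fun j => ⟨⟨(i, j, ⟨0, hα⟩), rfl⟩, rfl⟩)
      fun x y => (hadj x.1 y.1).trans ⟨fun h => h.2, fun h => ⟨x.2.trans y.2.symm, h⟩⟩,
      Fintype.card_fin]
  rw [homCount_kKt_eq_prod Prod.fst (fun i => ⟨(i, ⟨0, by omega⟩, ⟨0, hα⟩), rfl⟩)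
      (fun x y h => ((hadj x y).mp h).1) hreach,
    prod_congr rfl fun i _ => by rw [hblock i], prod_const, card_univ, Fintype.card_fin,
    mul_comm]

lemma nDeg_eq_ncard_neighborSet {U : Type*} (H : SimpleGraph U) (v : U) :
    nDeg H v = (H.neighborSet v).ncard := rfl

section MinDegree

variable {U : Type*} [Finite U] {H : SimpleGraph U} {t α k : ℕ}

lemma sum_ncard_colorClass {β : Type*} [Fintype β] (c : H.Coloring β) :
    ∑ i, (c.colorClass i).ncard = Nat.card U :=
  (Nat.card_eq_sum_card_fiber c).symm

lemma ncard_colorClass_add_nDeg_le {β : Type*} (c : H.Coloring β) (v : U) :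
    (c.colorClass (c v)).ncard + nDeg H v ≤ Nat.card U := by
  rw [nDeg_eq_ncard_neighborSet]
  calc _ = (c.colorClass (c v) ∪ H.neighborSet v).ncard :=
        (Set.ncard_union_eq (Set.disjoint_left.mpr fun _ hw hvw => c.valid hvw hw.symm)).symm
    _ ≤ Nat.card U := Set.ncard_le_card _

lemma ncard_colorClass_add_le (c : H.Coloring (Fin t)) (hdeg : ∀ v, (t - 1) * α ≤ nDeg H v)
    (hU : (t - 1) * α ≤ Nat.card U) (i : Fin t) :
    (c.colorClass i).ncard + (t - 1) * α ≤ Nat.card U := by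
  rcases (c.colorClass i).eq_empty_or_nonempty with h | ⟨v, rfl⟩
  · simpa [h] using hU
  · exact (Nat.add_le_add_left (hdeg v) _).trans (ncard_colorClass_add_nDeg_le c v)

lemma mul_le_card_of_coloring [Nonempty U] (ht : 2 ≤ t) (c : H.Coloring (Fin t))
    (hdeg : ∀ v, (t - 1) * α ≤ nDeg H v) : t * α ≤ Nat.card U := by
  have hU : (t - 1) * α ≤ Nat.card U := by
    obtain ⟨v⟩ := ‹Nonempty U›
    exact (hdeg v).trans (le_of_add_le_right (ncard_colorClass_add_nDeg_le c v))
  have hsum := Finset.sum_le_sum fun i (_ : i ∈ univ) => ncard_colorClass_add_le c hdeg hU i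
  rw [sum_add_distrib, sum_ncard_colorClass, sum_const, sum_const, card_univ,
    Fintype.card_fin, smul_eq_mul, smul_eq_mul] at hsum
  obtain ⟨s, rfl⟩ : ∃ s, t = s + 2 := ⟨t - 2, by omega⟩
  rw [show s + 2 - 1 = s + 1 by omega] at hsum
  nlinarith

lemma ncard_colorClass_eq_of_card_eq (c : H.Coloring (Fin t))
    (hdeg : ∀ v, (t - 1) * α ≤ nDeg H v) (hn : Nat.card U = t * α) (i : Fin t) :
    (c.colorClass i).ncard = α := by
  have hU : (t - 1) * α ≤ Nat.card U := hn ▸ Nat.mul_le_mul_right _ (Nat.sub_le _ _)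
  have hle : ∀ j ∈ univ, (c.colorClass j).ncard ≤ α := fun j _ => by
    have := ncard_colorClass_add_le c hdeg hU j
    rw [hn, Nat.sub_one_mul] at this
    have := Nat.le_mul_of_pos_left α j.pos
    omega
  have hsum : ∑ j, (c.colorClass j).ncard = ∑ _j : Fin t, α := by
    rw [sum_ncard_colorClass, hn, sum_const, card_univ, Fintype.card_fin, smul_eq_mul]
  exact (sum_eq_sum_iff_of_le hle).mp hsum i (mem_univ i)

lemma adj_iff_ne_of_card_eq (c : H.Coloring (Fin t)) (hdeg : ∀ v, (t - 1) * α ≤ nDeg H v)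
    (hn : Nat.card U = t * α) (u v : U) : H.Adj u v ↔ c u ≠ c v := by
  have hsub : H.neighborSet u ⊆ (c.colorClass (c u))ᶜ := fun _ huw hw => c.valid huw hw.symm
  have heq := Set.eq_of_subset_of_ncard_le hsub (by
    rw [Set.ncard_compl, ncard_colorClass_eq_of_card_eq c hdeg hn, hn, ← Nat.sub_one_mul]
    exact hdeg u)
  rw [ne_comm, ← mem_neighborSet, heq]
  rfl

lemma card_coloring_eq_factorial_of_card_eq (c : H.Coloring (Fin t))
    (hdeg : ∀ v, (t - 1) * α ≤ nDeg H v) (hα : 0 < α) (hn : Nat.card U = t * α) :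
    Nat.card (H.Coloring (Fin t)) = t ! := by
  have hsurj : Surjective c := fun i =>
    (c.colorClass i).nonempty_of_ncard_ne_zero (by
      rw [ncard_colorClass_eq_of_card_eq c hdeg hn i]; exact hα.ne')
  rw [card_coloring_eq_factorial c hsurj (adj_iff_ne_of_card_eq c hdeg hn), Fintype.card_fin]

lemma card_coloring_le_pow : Nat.card (H.Coloring (Fin t)) ≤ t ^ Nat.card U := by
  simpa [Nat.card_fun] using
    Nat.card_le_card_of_injective _ (DFunLike.coe_injective (F := H.Coloring (Fin t)))

lemma pow_card_coloring_lt (ht : 1 ≤ t) (hk : t ^ (t * α * (t * α + 1)) < k)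
    (hn : t * α < Nat.card U) :
    (k * Nat.card (H.Coloring (Fin t))) ^ (t * α) < (t ! * k) ^ Nat.card U :=
  calc (k * Nat.card (H.Coloring (Fin t))) ^ (t * α)
      ≤ k ^ (t * α) * t ^ (Nat.card U * (t * α)) := by
        rw [mul_pow, pow_mul t]
        gcongr
        exact card_coloring_le_pow
    _ < k ^ Nat.card U := Nat.pow_mul_pow_lt_pow ht hn hk
    _ ≤ (t ! * k) ^ Nat.card U := by
        gcongr
        exact Nat.le_mul_of_pos_left k t.factorial_pos

lemma pow_card_coloring_le [Nonempty U] (ht : 2 ≤ t) (hα : 0 < α)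
    (hk : t ^ (t * α * (t * α + 1)) < k) (c : H.Coloring (Fin t))
    (hdeg : ∀ v, (t - 1) * α ≤ nDeg H v) :
    (k * Nat.card (H.Coloring (Fin t))) ^ (t * α) ≤ (t ! * k) ^ Nat.card U := by
  rcases (mul_le_card_of_coloring ht c hdeg).eq_or_lt with hn | hn
  · rw [card_coloring_eq_factorial_of_card_eq c hdeg hα hn.symm, ← hn, mul_comm k]
  · exact (pow_card_coloring_lt (by omega) hk hn).le

end MinDegree

section Components

variable {V : Type*} {G : SimpleGraph V} {m t α k : ℕ}

lemma nDeg_induce_connectedComponent (P : G.ConnectedComponent)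
    (x : {v | G.connectedComponentMk v = P}) :
    nDeg (G.induce {v | G.connectedComponentMk v = P}) x = nDeg G x :=
  Nat.card_congr
    { toFun w := ⟨w.1.1, w.2⟩
      invFun w :=
        ⟨⟨w.1, (ConnectedComponent.connectedComponentMk_eq_of_adj w.2).symm.trans x.2⟩, w.2⟩ }

lemma nonempty_iso_mTuran {ι : Type*} [Finite V] [Finite ι] (π : V → ι) (c : V → Fin t)
    (hι : Nat.card ι = m) (hadj : ∀ u v, G.Adj u v ↔ π u = π v ∧ c u ≠ c v)
    (hfib : ∀ i j, Nat.card {v // π v = i ∧ c v = j} = α) :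
    Nonempty (G ≃g mTuran m t α) := by
  let F (v : V) : ι × Fin t := (π v, c v)
  have hF (p : ι × Fin t) : Nat.card {v // F v = p} = α :=
    (Nat.card_congr (Equiv.subtypeEquivRight fun _ => Prod.ext_iff)).trans (hfib p.1 p.2)
  let e : V ≃ Fin m × Fin t × Fin α :=
    (Equiv.sigmaFiberEquiv F).symm.trans <|
      (Equiv.sigmaCongrRight fun p => Finite.equivFinOfCardEq (hF p)).trans <|
        (Equiv.sigmaEquivProd _ _).trans <|
          (Equiv.prodCongr (Equiv.prodCongr (Finite.equivFinOfCardEq hι) (Equiv.refl _))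
            (Equiv.refl _)).trans (Equiv.prodAssoc _ _ _)
  refine ⟨⟨e, fun {u v} => ?_⟩⟩
  change (_ = _ ∧ _ ≠ _) ↔ _
  simp [e, F, hadj]

variable [Finite V]

lemma homCount_kKt_pow_le (ht : 2 ≤ t) (hα : 0 < α) (hk : t ^ (t * α * (t * α + 1)) < k)
    (c : G.Coloring (Fin t)) (hdeg : ∀ v, (t - 1) * α ≤ nDeg G v) :
    homCount G (kKt k t).Adj ^ (t * α) ≤ (t ! * k) ^ Nat.card V ∧
      (homCount G (kKt k t).Adj ^ (t * α) = (t ! * k) ^ Nat.card V →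
        ∀ P : G.ConnectedComponent, Nat.card {v | G.connectedComponentMk v = P} = t * α) := by
  have := Fintype.ofFinite G.ConnectedComponent
  have hne (P : G.ConnectedComponent) : Nonempty {v | G.connectedComponentMk v = P} := by
    induction P using ConnectedComponent.ind with | h v => exact ⟨⟨v, rfl⟩⟩
  let cP (P : G.ConnectedComponent) :
      (G.induce {v | G.connectedComponentMk v = P}).Coloring (Fin t) :=
    c.comp (Embedding.induce _).toHom
  have hdegP (P : G.ConnectedComponent) x :
      (t - 1) * α ≤ nDeg (G.induce {v | G.connectedComponentMk v = P}) x :=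
    (nDeg_induce_connectedComponent P x).symm ▸ hdeg x
  have hle (P : G.ConnectedComponent) := pow_card_coloring_le ht hα hk (cP P) (hdegP P)
  rw [homCount_kKt_eq_prod G.connectedComponentMk Quot.mk_surjective
      (fun _ _ h => ConnectedComponent.connectedComponentMk_eq_of_adj h)
      fun _ _ => ConnectedComponent.exact,
    ← prod_pow, Nat.card_eq_sum_card_fiber G.connectedComponentMk, ← prod_pow_eq_pow_sum]
  refine ⟨prod_le_prod' fun P _ => hle P, fun heq P => ?_⟩
  by_contra hcard
  refine (prod_lt_prod (fun P _ => ?_) (fun P _ => hle P) ⟨P, mem_univ P,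
    pow_card_coloring_lt (by omega) hk
      ((mul_le_card_of_coloring ht (cP P) (hdegP P)).lt_of_ne (Ne.symm hcard))⟩).ne heq
  exact pow_pos (Nat.mul_pos (by omega) (Nat.card_pos_iff.mpr ⟨⟨cP P⟩, inferInstance⟩)) _

theorem homCount_kKt_le_of_minDegree (ht : 2 ≤ t) (hα : 0 < α)
    (hk : t ^ (t * α * (t * α + 1)) < k) (hcard : Nat.card V = m * t * α)
    (hdeg : ∀ v, (t - 1) * α ≤ nDeg G v) :
    homCount G (kKt k t).Adj ≤ (t ! * k) ^ m ∧
      (homCount G (kKt k t).Adj = (t ! * k) ^ m → Nonempty (G ≃g mTuran m t α)) := by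
  rcases isEmpty_or_nonempty (G.Coloring (Fin t)) with hc | ⟨⟨c⟩⟩
  · have : IsEmpty {f : V → Fin k × Fin t // ∀ u v, G.Adj u v → (kKt k t).Adj (f u) (f v)} :=
      ⟨fun f => hc.elim (Coloring.mk (fun v => (f.1 v).2) fun h => (f.2 _ _ h).2)⟩
    have hpos : 0 < (t ! * k) ^ m := pow_pos (Nat.mul_pos t.factorial_pos (by omega)) _
    rw [homCount, Nat.card_of_isEmpty]
    exact ⟨hpos.le, fun h => absurd h hpos.ne⟩
  obtain ⟨hle, heq⟩ := homCount_kKt_pow_le ht hα hk c hdeg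
  rw [hcard, mul_assoc, pow_mul (t ! * k) m] at hle heq
  refine ⟨(Nat.pow_le_pow_iff_left (by positivity)).mp hle, fun h => ?_⟩
  have hP := heq (by rw [h])
  have := Fintype.ofFinite G.ConnectedComponent
  have hcomp : Nat.card G.ConnectedComponent = m := by
    have hsum : Nat.card V = ∑ _P : G.ConnectedComponent, t * α :=
      (Nat.card_eq_sum_card_fiber G.connectedComponentMk).trans (sum_congr rfl fun P _ => hP P)
    rw [hcard, sum_const, card_univ, smul_eq_mul, ← Nat.card_eq_fintype_card, mul_assoc] at hsum
    exact (Nat.eq_of_mul_eq_mul_right (by positivity) hsum).symm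
  have hdegP (P : G.ConnectedComponent) x :
      (t - 1) * α ≤ nDeg (G.induce {v | G.connectedComponentMk v = P}) x :=
    (nDeg_induce_connectedComponent P x).symm ▸ hdeg x
  let cP (P : G.ConnectedComponent) :
      (G.induce {v | G.connectedComponentMk v = P}).Coloring (Fin t) :=
    c.comp (Embedding.induce _).toHom
  refine nonempty_iso_mTuran G.connectedComponentMk c hcomp (fun u v => ⟨fun h =>
    ⟨ConnectedComponent.connectedComponentMk_eq_of_adj h, c.valid h⟩, fun ⟨huv, hc⟩ => ?_⟩)
    fun P j => ?_
  · exact (adj_iff_ne_of_card_eq (cP _) (hdegP _) (hP _) ⟨u, rfl⟩ ⟨v, huv.symm⟩).mpr hc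
  · exact (Nat.card_congr (Equiv.subtypeSubtypeEquivSubtypeInter _ _)).symm.trans
      (ncard_colorClass_eq_of_card_eq (cP P) (hdegP P) (hP P) j)

end Components

end SimpleGraph

theorem stmt12_general (δ t α : ℕ) (hδ : 3 ≤ δ) (hα : δ = (t - 1) * α) :
    ∃ k₀ : ℕ, ∀ k ≥ k₀, ∀ m : ℕ, ∀ (V : Type) [Fintype V], ∀ G : SimpleGraph V,
      Fintype.card V = m * t * α → (∀ v, δ ≤ nDeg G v) →
      homCount G (kKt k t).Adj ≤ (Nat.factorial t * k) ^ m ∧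
      homCount (mTuran m t α) (kKt k t).Adj = (Nat.factorial t * k) ^ m ∧
      (homCount G (kKt k t).Adj = (Nat.factorial t * k) ^ m ↔
        Nonempty (G ≃g mTuran m t α)) := by
  have hα0 : 0 < α := Nat.pos_of_ne_zero fun h => by simp [h] at hα; omega
  have ht : 2 ≤ t := by
    by_contra
    have : t - 1 = 0 := by omega
    simp [this] at hα
    omega
  refine ⟨t ^ (t * α * (t * α + 1)) + 1, fun k hk m V _ G hcard hdeg => ?_⟩
  have hturan := homCount_mTuran m t α k ht hα0
  obtain ⟨hle, hiso⟩ := homCount_kKt_le_of_minDegree ht hα0 (Nat.lt_of_succ_le hk)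
    (by rwa [Nat.card_eq_fintype_card]) fun v => hα ▸ hdeg v
  exact ⟨hle, hturan, ⟨hiso, fun ⟨e⟩ => (homCount_congr _ e).trans hturan⟩⟩

/-- fix `δ ≥ 3` and `3 ≤ t ≤ δ` with `δ = (t-1)α`. There is `k₀(δ)` such
that for all `k ≥ k₀` and all `m`: any graph `G` on `n = mtα` vertices with minimum
degree at least `δ` satisfies `hom(G, kK_t) ≤ hom(m·T_t(tα), kK_t) = (t!k)^m`, with
equality iff `G` is the disjoint union of `m` copies of `T_t(tα)`. -/
theorem stmt12 (δ t α : ℕ) (hδ : 3 ≤ δ) (ht3 : 3 ≤ t) (htδ : t ≤ δ)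
    (hα : δ = (t - 1) * α) :
    ∃ k₀ : ℕ, ∀ k ≥ k₀, ∀ m : ℕ, ∀ (V : Type) [Fintype V], ∀ G : SimpleGraph V,
      Fintype.card V = m * t * α → (∀ v, δ ≤ nDeg G v) →
      homCount G (kKt k t).Adj ≤ (Nat.factorial t * k) ^ m ∧
      homCount (mTuran m t α) (kKt k t).Adj = (Nat.factorial t * k) ^ m ∧
      (homCount G (kKt k t).Adj = (Nat.factorial t * k) ^ m ↔
        Nonempty (G ≃g mTuran m t α)) :=
  stmt12_general δ t α hδ hα
end
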